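/- arXiv:1506.00112 — 2 statements merged into one kernel-verified Lean document; each statement's English description precedes it below -/
import Mathlib

section
/- Let τ be a left invariant filter on a group G (gU ∈ τ for all g ∈ G, U ∈ τ). A subset A of G is τ-prethick if and only if A is not τ-small. -/
variable {S : Type*} [Semigroup S]

/-- `g⁻¹A = {x : g*x ∈ A}`. -/
def invImg (g : S) (A : Set S) : Set S := {x | g * x ∈ A}

/-- `F⁻¹A = ⋃_{g∈F} g⁻¹A`. -/
def finvImg (F : Set S) (A : Set S) : Set S := ⋃ g ∈ F, invImg g A

/-- `L` is `τ`-large. -/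
def largeTau (τ : Filter S) (L : Set S) : Prop :=
  ∀ U ∈ τ, ∃ F : Finset S, ↑F ⊆ U ∧ finvImg ↑F L ∈ τ

/-- `A_p = {x : x⁻¹A ∈ p}`. -/
def memImg (p : Ultrafilter S) (A : Set S) : Set S := {x | invImg x A ∈ p}

/-- `T` is `τ`-thick. -/
def thickTau (τ : Filter S) (T : Set S) : Prop :=
  ∃ U ∈ τ, ∀ F : Finset S, ↑F ⊆ U → ∀ V ∈ τ, ∃ x ∈ V, ∀ f ∈ F, f * x ∈ T

/-- `A` is `τ`-prethick. -/
def prethickTau (τ : Filter S) (A : Set S) : Prop :=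
  ∀ U ∈ τ, ∃ F : Finset S, ↑F ⊆ U ∧ thickTau τ (finvImg ↑F A)

/-- `A` is `τ`-small. -/
def smallTau (τ : Filter S) (A : Set S) : Prop :=
  ∀ L, largeTau τ L → largeTau τ (L \ A)

/-- `T` is `τ`-extrathick. -/
def extrathickTau (τ : Filter S) (T : Set S) : Prop :=
  ∀ p : Ultrafilter S, τ ≤ ↑p → memImg p T ∈ τ

/-- Product of ultrafilters: `A ∈ p*q ↔ {x : x⁻¹A ∈ q} ∈ p`. -/
def uMul (p q : Ultrafilter S) : Ultrafilter S :=
  p.bind fun x => q.map fun y => x * y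

/-- `τ̄ = {p ∈ βS : τ ⊆ p}`. -/
def tauBar (τ : Filter S) : Set (Ultrafilter S) := {p | τ ≤ ↑p}

/-- `L` is a left ideal of the subsemigroup `T` of `βS`. -/
def isLeftIdeal (T L : Set (Ultrafilter S)) : Prop :=
  L.Nonempty ∧ L ⊆ T ∧ ∀ q ∈ T, ∀ r ∈ L, uMul q r ∈ L

/-- `L` is a minimal left ideal of `T`. -/
def isMinLeftIdeal (T L : Set (Ultrafilter S)) : Prop :=
  isLeftIdeal T L ∧ ∀ L', isLeftIdeal T L' → L' ⊆ L → L' = L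

/-- `M(τ̄)`: union of all minimal left ideals of `τ̄`. -/
def MSet (τ : Filter S) : Set (Ultrafilter S) := ⋃₀ {L | isMinLeftIdeal (tauBar τ) L}

/-- `Δ_τ(A)`. -/
def DeltaTau (τ : Filter S) (A : Set S) : Set S :=
  {x | ∀ U ∈ τ, ((invImg x A ∩ A) ∩ U).Nonempty}

/-! If `A` is small, so is every `F⁻¹A`: small sets are closed under finite unions and, by left
invariance, under `g⁻¹ ·`. Hence `G \ F⁻¹A` is large and `F⁻¹A` cannot be thick.
Conversely, let `L` be large with `L \ A` not large, witnessed by `V ∈ τ`. Given `U ∈ τ`, pick a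
finite `F ⊆ U` with `F⁻¹L ∈ τ`. For finite `E ⊆ ⋂_{f ∈ F} f⁻¹V` we have `FE ⊆ V`, so
`(FE)⁻¹(L \ A) ∉ τ`, and every `x ∈ ⋂_{e ∈ E} e⁻¹(F⁻¹L)` outside it satisfies `Ex ⊆ F⁻¹A`. -/

open Pointwise

section Semigroup

variable {τ : Filter S}

lemma mem_finvImg {F A : Set S} {x : S} : x ∈ finvImg F A ↔ ∃ g ∈ F, g * x ∈ A := by
  simp [finvImg, invImg]

lemma finvImg_diff_subset (F L A : Set S) : finvImg F L \ finvImg F A ⊆ finvImg F (L \ A) := by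
  rintro x ⟨hL, hA⟩
  obtain ⟨f, hf, hfx⟩ := mem_finvImg.mp hL
  exact mem_finvImg.mpr ⟨f, hf, hfx, fun h => hA (mem_finvImg.mpr ⟨f, hf, h⟩)⟩

lemma invImg_finvImg_subset_finvImg_mul {F E : Set S} {e : S} (he : e ∈ E) (A : Set S) :
    invImg e (finvImg F A) ⊆ finvImg (F * E) A := by
  intro x hx
  obtain ⟨f, hf, hfx⟩ := mem_finvImg.mp hx
  exact mem_finvImg.mpr ⟨f * e, Set.mul_mem_mul hf he, by rwa [mul_assoc]⟩

lemma finvImg_invImg (F : Set S) (g : S) (A : Set S) :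
    finvImg F (invImg g A) = finvImg ((g * ·) '' F) A := by
  ext x
  simp [mem_finvImg, invImg, mul_assoc]

lemma largeTau_univ : largeTau τ Set.univ := by
  intro U hU
  rcases U.eq_empty_or_nonempty with rfl | ⟨u, hu⟩
  · exact ⟨∅, by simp, Filter.mem_of_superset hU (Set.empty_subset _)⟩
  · refine ⟨{u}, by simpa using hu, Filter.mem_of_superset Filter.univ_mem fun x _ => ?_⟩
    exact mem_finvImg.mpr ⟨u, by simp, trivial⟩

lemma smallTau_empty : smallTau τ (∅ : Set S) := by
  intro L hL
  rwa [Set.sdiff_empty]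

lemma smallTau_union {A B : Set S} (hA : smallTau τ A) (hB : smallTau τ B) :
    smallTau τ (A ∪ B) := by
  intro L hL
  rw [← Set.sdiff_sdiff]
  exact hB _ (hA L hL)

lemma largeTau_compl_of_smallTau {A : Set S} (hA : smallTau τ A) : largeTau τ Aᶜ := by
  rw [Set.compl_eq_univ_sdiff]
  exact hA _ largeTau_univ

lemma not_thickTau_of_largeTau_compl {T : Set S} (h : largeTau τ Tᶜ) : ¬ thickTau τ T := by
  rintro ⟨U, hU, hT⟩
  obtain ⟨F, hFU, hFT⟩ := h U hU
  obtain ⟨x, hx, hxT⟩ := hT F hFU _ hFT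
  obtain ⟨f, hf, hfx⟩ := mem_finvImg.mp hx
  exact hfx (hxT f hf)

end Semigroup

section Group

variable {G : Type*} [Group G] {τ : Filter G}

def IsLeftInvariant (τ : Filter G) : Prop := ∀ g : G, ∀ U ∈ τ, (fun x => g * x) '' U ∈ τ

lemma IsLeftInvariant.invImg_mem (hτ : IsLeftInvariant τ) (g : G) {U : Set G} (hU : U ∈ τ) :
    invImg g U ∈ τ := by
  have : invImg g U = (fun x => g⁻¹ * x) '' U := by
    rw [Set.image_mul_left, inv_inv]
    rfl
  rw [this]
  exact hτ g⁻¹ U hU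

lemma largeTau_invImg (hτ : IsLeftInvariant τ) {L : Set G} (hL : largeTau τ L) (g : G) :
    largeTau τ (invImg g L) := by
  classical
  intro U hU
  obtain ⟨F, hFU, hFL⟩ := hL _ (hτ g U hU)
  refine ⟨F.image (g⁻¹ * ·), ?_, ?_⟩
  · intro x hx
    simp only [Finset.coe_image, Set.mem_image] at hx
    obtain ⟨_, hf, rfl⟩ := hx
    obtain ⟨u, hu, rfl⟩ := hFU hf
    simpa using hu
  · rw [finvImg_invImg, Finset.coe_image, Set.image_image]
    simpa using hFL

lemma smallTau_invImg (hτ : IsLeftInvariant τ) {A : Set G} (hA : smallTau τ A) (g : G) :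
    smallTau τ (invImg g A) := by
  intro L hL
  have hgL := hA _ (largeTau_invImg hτ hL g⁻¹)
  have : invImg g (invImg g⁻¹ L \ A) = L \ invImg g A := by
    ext x
    simp [invImg]
  rw [← this]
  exact largeTau_invImg hτ hgL g

lemma smallTau_finvImg (hτ : IsLeftInvariant τ) {A : Set G} (hA : smallTau τ A)
    (F : Finset G) : smallTau τ (finvImg ↑F A) := by
  classical
  induction F using Finset.induction_on with
  | empty => simpa [finvImg] using smallTau_empty
  | insert g F _ ih =>
    rw [finvImg, Finset.coe_insert, Set.biUnion_insert]
    exact smallTau_union (smallTau_invImg hτ hA g) ih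

lemma not_smallTau_of_prethickTau (hτ : IsLeftInvariant τ) {A : Set G}
    (hA : prethickTau τ A) : ¬ smallTau τ A := by
  intro hsmall
  obtain ⟨F, -, hthick⟩ := hA Set.univ Filter.univ_mem
  exact not_thickTau_of_largeTau_compl
    (largeTau_compl_of_smallTau (smallTau_finvImg hτ hsmall F)) hthick

lemma thickTau_finvImg_of_not_largeTau_diff (hτ : IsLeftInvariant τ) {L A V : Set G}
    (hV : V ∈ τ) (hLA : ∀ H : Finset G, ↑H ⊆ V → finvImg ↑H (L \ A) ∉ τ)
    {F : Finset G} (hFL : finvImg ↑F L ∈ τ) : thickTau τ (finvImg ↑F A) := by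
  classical
  refine ⟨⋂ f ∈ F, invImg f V,
    (Filter.biInter_finset_mem F).mpr fun f _ => hτ.invImg_mem f hV, fun E hE W hW => ?_⟩
  have hFE : ↑(F * E) ⊆ V := by
    rw [Finset.coe_mul, Set.mul_subset_iff]
    exact fun f hf e he => Set.mem_iInter₂.mp (hE he) f hf
  have hgood : W ∩ ⋂ e ∈ E, invImg e (finvImg ↑F L) ∈ τ :=
    Filter.inter_mem hW ((Filter.biInter_finset_mem E).mpr fun e _ => hτ.invImg_mem e hFL)
  obtain ⟨x, ⟨hxW, hxL⟩, hxLA⟩ :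
      ((W ∩ ⋂ e ∈ E, invImg e (finvImg ↑F L)) \ finvImg ↑(F * E) (L \ A)).Nonempty := by
    by_contra h
    rw [Set.not_nonempty_iff_eq_empty, Set.sdiff_eq_empty] at h
    exact hLA _ hFE (Filter.mem_of_superset hgood h)
  refine ⟨x, hxW, fun e he => ?_⟩
  by_contra hxA
  rw [Finset.coe_mul] at hxLA
  exact hxLA (invImg_finvImg_subset_finvImg_mul he _
    (finvImg_diff_subset _ _ _ ⟨Set.mem_iInter₂.mp hxL e he, hxA⟩))

lemma prethickTau_of_not_smallTau (hτ : IsLeftInvariant τ) {A : Set G}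
    (hA : ¬ smallTau τ A) : prethickTau τ A := by
  simp only [smallTau, largeTau, not_forall, not_exists, not_and] at hA
  obtain ⟨L, hL, V, hV, hLA⟩ := hA
  intro U hU
  obtain ⟨F, hFU, hFL⟩ := hL U hU
  exact ⟨F, hFU, thickTau_finvImg_of_not_largeTau_diff hτ hV hLA hFL⟩

end Group

theorem stmt13_general {G : Type*} [Group G] (τ : Filter G)
    (hinv : ∀ g : G, ∀ U ∈ τ, (fun x => g * x) '' U ∈ τ) (A : Set G) :
    prethickTau τ A ↔ ¬ smallTau τ A :=
  ⟨not_smallTau_of_prethickTau hinv, prethickTau_of_not_smallTau hinv⟩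

theorem stmt13 {G : Type*} [Group G] (τ : Filter G) [τ.NeBot]
    (hinv : ∀ g : G, ∀ U ∈ τ, (fun x => g * x) '' U ∈ τ) (A : Set G) :
    prethickTau τ A ↔ ¬ smallTau τ A :=
  stmt13_general τ hinv A
end

section
/- Let τ be a left inverse invariant filter on a semigroup S. If A ⊆ S is τ-prethick, then Δ_τ(A) = {x ∈ S : (x⁻¹A ∩ A) ∩ U ≠ ∅ for every U ∈ τ} is τ-large. -/
variable {S : Type*} [Semigroup S]

/-!
Work in `βS` with the product `A ∈ p * q ↔ {x | x⁻¹A ∈ q} ∈ p`; invariance of `τ` makes `τ̄` a left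
ideal of `βS`. Given `U ∈ τ`, prethickness gives a finite `F` with `T = F⁻¹A` τ-thick, which
yields `r ∈ τ̄` with `T ∈ w * r` for every `w ∈ τ̄`. Inside the closed left ideal `τ̄ * r` take a
minimal closed left ideal `L` and some `q ∈ L`; then `t⁻¹A ∈ q` for some `t ∈ F`, so
`A ∈ p := t * q`. Minimality gives `p ∈ τ̄ * (q' * p)` for every `q' ∈ τ̄`, and this forces
`A_p = {x | x⁻¹A ∈ p}` to be τ-large: otherwise some `q' ∈ τ̄` would avoid every `x⁻¹A_p` with
`x ∈ U`. Finally `A_p ⊆ Δ_τ(A)` since `x⁻¹A ∩ A ∈ p` and `p` refines `τ`.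
-/

open Filter Set

attribute [local instance] Ultrafilter.mul Ultrafilter.semigroup

/-- The paper's `τ̄`: the ultrafilters containing every member of `τ`. (`tauBar` asks for `τ ≤ ↑p`
instead, which for an ultrafilter `p` and a proper filter `τ` forces `↑p = τ`.) -/
def ultrafiltersLE {α : Type*} (τ : Filter α) : Set (Ultrafilter α) := {p | ↑p ≤ τ}

theorem isClosed_ultrafiltersLE {α : Type*} (τ : Filter α) : IsClosed (ultrafiltersLE τ) := by
  have : ultrafiltersLE τ = ⋂ U ∈ τ, {p : Ultrafilter α | U ∈ p} := by
    ext p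
    simp [ultrafiltersLE, Filter.le_def]
  rw [this]
  exact isClosed_biInter fun U _ => ultrafilter_isClosed_basic U

theorem ultrafiltersLE_nonempty {α : Type*} (τ : Filter α) [τ.NeBot] :
    (ultrafiltersLE τ).Nonempty :=
  Ultrafilter.exists_le τ

theorem Filter.exists_ultrafilter_forall_mem_of_forall_finset {α : Type*} (τ : Filter α)
    (U : Set α) (P : α → α → Prop)
    (h : ∀ F : Finset α, ↑F ⊆ U → ∀ V ∈ τ, ∃ x ∈ V, ∀ f ∈ F, P f x) :
    ∃ q ∈ ultrafiltersLE τ, ∀ g ∈ U, {x | P g x} ∈ q := by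
  set C : U → Set α := fun g => {x | P g x}
  have hne : (τ ⊓ ⨅ g, 𝓟 (C g)).NeBot := by
    rw [(τ.basis_sets.inf (hasBasis_iInf_principal_finite C)).neBot_iff]
    rintro ⟨V, t⟩ ⟨hV, ht⟩
    obtain ⟨x, hxV, hx⟩ := h (ht.image Subtype.val).toFinset (by simp) V hV
    exact ⟨x, hxV, mem_iInter₂.2 fun g hg => hx g (by simpa using hg)⟩
  obtain ⟨q, hq⟩ := Ultrafilter.exists_le (τ ⊓ ⨅ g, 𝓟 (C g))
  exact ⟨q, hq.trans inf_le_left, fun g hg =>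
    hq (mem_inf_of_right (mem_iInf_of_mem ⟨g, hg⟩ (mem_principal_self _)))⟩

section ClosedLeftIdeal

variable {X : Type*} [TopologicalSpace X] [Mul X]

def IsClosedLeftIdeal (N : Set X) : Prop :=
  N.Nonempty ∧ IsClosed N ∧ ∀ v q, q ∈ N → v * q ∈ N

theorem isClosedLeftIdeal_sInter [CompactSpace X] {c : Set (Set X)}
    (hc : ∀ N ∈ c, IsClosedLeftIdeal N) (hchain : IsChain (· ⊆ ·) c) (hne : c.Nonempty) :
    IsClosedLeftIdeal (⋂₀ c) := by
  have : Nonempty c := hne.to_subtype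
  refine ⟨?_, isClosed_sInter fun N hN => (hc N hN).2.1,
    fun v q hq N hN => (hc N hN).2.2 v q (hq N hN)⟩
  refine IsCompact.nonempty_sInter_of_directed_nonempty_isCompact_isClosed
    (fun a ha b hb => (hchain.total ha hb).elim (fun h => ⟨a, ha, subset_rfl, h⟩)
      fun h => ⟨b, hb, h, subset_rfl⟩)
    (fun N hN => (hc N hN).1) (fun N hN => (hc N hN).2.1.isCompact) fun N hN => (hc N hN).2.1

theorem IsClosedLeftIdeal.exists_minimal_subset [CompactSpace X] {N : Set X}
    (hN : IsClosedLeftIdeal N) : ∃ L ⊆ N, Minimal IsClosedLeftIdeal L := by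
  obtain ⟨L, -, hL⟩ := zorn_superset_nonempty {L | IsClosedLeftIdeal L ∧ L ⊆ N}
    (fun c hc hchain hne => ⟨⋂₀ c,
      ⟨isClosedLeftIdeal_sInter (fun L hL => (hc hL).1) hchain hne,
        (sInter_subset_of_mem hne.some_mem).trans (hc hne.some_mem).2⟩,
      fun _ => sInter_subset_of_mem⟩) N ⟨hN, subset_rfl⟩
  exact ⟨L, hL.prop.2, hL.prop.1, fun L' hL' hL'L => hL.le_of_le ⟨hL', hL'L.trans hL.prop.2⟩ hL'L⟩

end ClosedLeftIdeal

section

variable {τ : Filter S}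

theorem mem_mul_iff_memImg {p q : Ultrafilter S} {A : Set S} : A ∈ p * q ↔ memImg q A ∈ p :=
  Iff.rfl

theorem invImg_invImg (x y : S) (A : Set S) : invImg y (invImg x A) = invImg (x * y) A := by
  ext z
  simp [invImg, mul_assoc]

theorem memImg_invImg (p : Ultrafilter S) (x : S) (A : Set S) :
    memImg p (invImg x A) = invImg x (memImg p A) := by
  ext y
  simp only [memImg, invImg_invImg]
  rfl

theorem mem_pure_mul_iff {t : S} {q : Ultrafilter S} {A : Set S} :
    A ∈ pure t * q ↔ invImg t A ∈ q :=
  Iff.rfl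

theorem finvImg_mono {F : Set S} {B C : Set S} (h : B ⊆ C) : finvImg F B ⊆ finvImg F C :=
  biUnion_mono subset_rfl fun _ _ _ hx => h hx

theorem largeTau.mono {B C : Set S} (hB : largeTau τ B) (h : B ⊆ C) : largeTau τ C := fun U hU =>
  let ⟨F, hFU, hF⟩ := hB U hU
  ⟨F, hFU, mem_of_superset hF (finvImg_mono h)⟩

theorem mul_mem_ultrafiltersLE (hinv : ∀ g : S, ∀ U ∈ τ, invImg g U ∈ τ) (v : Ultrafilter S)
    {q : Ultrafilter S} (hq : q ∈ ultrafiltersLE τ) : v * q ∈ ultrafiltersLE τ := fun U hU =>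
  mem_mul_iff_memImg.2 (univ_mem' fun x => hq (hinv x U hU))

theorem isClosedLeftIdeal_image_mul_right [τ.NeBot] (hinv : ∀ g : S, ∀ U ∈ τ, invImg g U ∈ τ)
    (r : Ultrafilter S) : IsClosedLeftIdeal ((· * r) '' ultrafiltersLE τ) := by
  refine ⟨(ultrafiltersLE_nonempty τ).image _,
    ((isClosed_ultrafiltersLE τ).isCompact.image (Ultrafilter.continuous_mul_left r)).isClosed, ?_⟩
  rintro v _ ⟨w, hw, rfl⟩
  exact ⟨v * w, mul_mem_ultrafiltersLE hinv v hw, mul_assoc v w r⟩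

theorem Minimal.image_mul_right_ultrafiltersLE_eq [τ.NeBot]
    (hinv : ∀ g : S, ∀ U ∈ τ, invImg g U ∈ τ)
    {L : Set (Ultrafilter S)} (hL : Minimal IsClosedLeftIdeal L) {q : Ultrafilter S}
    (hq : q ∈ L) : (· * q) '' ultrafiltersLE τ = L :=
  hL.eq_of_subset (isClosedLeftIdeal_image_mul_right hinv q)
    (image_subset_iff.2 fun w _ => hL.prop.2.2 w q hq)

theorem largeTau_memImg_of_minimal [τ.NeBot] (hinv : ∀ g : S, ∀ U ∈ τ, invImg g U ∈ τ)
    {L : Set (Ultrafilter S)} (hL : Minimal IsClosedLeftIdeal L) {p : Ultrafilter S}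
    (hp : p ∈ L) {A : Set S} (hA : A ∈ p) : largeTau τ (memImg p A) := by
  intro U hU
  by_contra! hsmall
  obtain ⟨q, hq, hqU⟩ := exists_ultrafilter_forall_mem_of_forall_finset τ U
    (fun g x => g * x ∉ memImg p A) fun F hFU V hV => by
      by_contra! hF
      exact hsmall F hFU (mem_of_superset hV fun x hx => by simpa [finvImg, invImg] using hF x hx)
  obtain ⟨w, hw, hwp⟩ : p ∈ (· * (q * p)) '' ultrafiltersLE τ := by
    rwa [Minimal.image_mul_right_ultrafiltersLE_eq hinv hL (hL.prop.2.2 q p hp)]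
  rw [← hwp, mem_mul_iff_memImg] at hA
  obtain ⟨x, hxA, hxU⟩ := Ultrafilter.nonempty_of_mem (inter_mem hA (hw hU))
  rw [memImg, mem_ofPred_eq, mem_mul_iff_memImg, memImg_invImg] at hxA
  exact Ultrafilter.compl_notMem_iff.2 hxA (hqU x hxU)

theorem memImg_subset_deltaTau {p : Ultrafilter S} (hp : p ∈ ultrafiltersLE τ) {A : Set S}
    (hA : A ∈ p) :
    memImg p A ⊆ DeltaTau τ A := fun _ hx _ hU =>
  Ultrafilter.nonempty_of_mem (inter_mem (inter_mem hx hA) (hp hU))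

theorem thickTau.exists_minimal_forall_mem [τ.NeBot] (hinv : ∀ g : S, ∀ U ∈ τ, invImg g U ∈ τ)
    {T : Set S} (hT : thickTau τ T) :
    ∃ L, Minimal IsClosedLeftIdeal L ∧ L ⊆ ultrafiltersLE τ ∧ ∀ q ∈ L, T ∈ q := by
  obtain ⟨U₀, hU₀, hthick⟩ := hT
  obtain ⟨r, hr, hrT⟩ :=
    exists_ultrafilter_forall_mem_of_forall_finset τ U₀ (fun g x => g * x ∈ T) hthick
  obtain ⟨L, hLr, hL⟩ := (isClosedLeftIdeal_image_mul_right (τ := τ) hinv r).exists_minimal_subset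
  refine ⟨L, hL, hLr.trans (image_subset_iff.2 fun w _ => mul_mem_ultrafiltersLE hinv w hr), ?_⟩
  rintro _ hq
  obtain ⟨w, hw, rfl⟩ := hLr hq
  exact mem_mul_iff_memImg.2 (mem_of_superset (hw hU₀) hrT)

end

theorem stmt14 (τ : Filter S) [τ.NeBot]
    (hinv : ∀ g : S, ∀ U ∈ τ, invImg g U ∈ τ)
    (A : Set S) (hA : prethickTau τ A) :
    largeTau τ (DeltaTau τ A) := by
  intro U hU
  obtain ⟨F, -, hthick⟩ := hA U hU
  obtain ⟨L, hL, hLτ, hLT⟩ := hthick.exists_minimal_forall_mem hinv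
  obtain ⟨q, hq⟩ := hL.prop.1
  obtain ⟨t, -, htA⟩ : ∃ t ∈ (F : Set S), invImg t A ∈ q :=
    (Ultrafilter.finite_biUnion_mem_iff F.finite_toSet).1 (hLT q hq)
  have hpL : pure t * q ∈ L := hL.prop.2.2 _ q hq
  exact (largeTau_memImg_of_minimal hinv hL hpL (mem_pure_mul_iff.2 htA)).mono
    (memImg_subset_deltaTau (hLτ hpL) (mem_pure_mul_iff.2 htA)) U hU
end
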